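/- arXiv:2001.10182 — 4 statements merged into one kernel-verified Lean document; each statement's English description precedes it below -/
import Mathlib

section
/- For every real number r with 0 < r ≤ 1, the map Ψ_r is injective on the exterior of the circle of radius (1+r)/2: if w₁, w₂ ∈ ℂ satisfy |w₁| > (1+r)/2, |w₂| > (1+r)/2 and Ψ_r(w₁) = Ψ_r(w₂), then w₁ = w₂. -/
open Complex

/-- The Joukowski-type map `Ψ_r(w) = w + (1 - r²)/(4w)`. -/
noncomputable def JoukowskiMap (r : ℝ) (w : ℂ) : ℂ := w + (1 - (r : ℂ) ^ 2) / (4 * w)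

theorem stmt_1 (r : ℝ) (hr0 : 0 < r) (hr1 : r ≤ 1) (w₁ w₂ : ℂ)
    (hw₁ : (1 + r) / 2 < ‖w₁‖) (hw₂ : (1 + r) / 2 < ‖w₂‖)
    (h : JoukowskiMap r w₁ = JoukowskiMap r w₂) : w₁ = w₂ := by
  have hpos : (0:ℝ) < (1 + r) / 2 := by linarith
  have h1 : w₁ ≠ 0 := by
    intro h0; rw [h0, norm_zero] at hw₁; linarith
  have h2 : w₂ ≠ 0 := by
    intro h0; rw [h0, norm_zero] at hw₂; linarith
  unfold JoukowskiMap at h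
  have key : (w₁ - w₂) * (4 * w₁ * w₂ - (1 - (r:ℂ)^2)) = 0 := by
    field_simp at h
    linear_combination h
  rcases mul_eq_zero.mp key with h' | h'
  · exact sub_eq_zero.mp h'
  · exfalso
    have heq : (4 : ℂ) * w₁ * w₂ = 1 - (r:ℂ)^2 := by
      have := sub_eq_zero.mp h'; linear_combination this
    have habs : 4 * ‖w₁‖ * ‖w₂‖ = ‖(1 - (r:ℂ)^2)‖ := by
      rw [← heq]; simp [map_mul]
    have hcast : (1 - (r:ℂ)^2) = ((1 - r^2 : ℝ) : ℂ) := by push_cast; ring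
    have habs2 : ‖(1 - (r:ℂ)^2)‖ = 1 - r^2 := by
      rw [hcast, Complex.norm_real, Real.norm_eq_abs]; exact abs_of_nonneg (by nlinarith)
    nlinarith [mul_lt_mul'' hw₁ hw₂ hpos.le hpos.le, norm_nonneg w₁]
end

section
/- For every real number r with 0 < r ≤ 1 and every w ∈ ℂ with |w| > (1+r)/2, the point z = Ψ_r(w) lies in the exterior of the ellipse with semiaxes 1 and r; that is, (Re z)² + (Im z)²/r² > 1. -/
open Complex

theorem stmt_2 (r : ℝ) (hr0 : 0 < r) (hr1 : r ≤ 1) (w : ℂ)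
    (hw : (1 + r) / 2 < ‖w‖) :
    (JoukowskiMap r w).re ^ 2 + (JoukowskiMap r w).im ^ 2 / r ^ 2 > 1 := by
  have habs : ‖w‖ ^ 2 = w.re ^ 2 + w.im ^ 2 := by
    rw [Complex.sq_norm, Complex.normSq_apply]; ring
  have hsbig : ((1 + r) / 2) ^ 2 < w.re ^ 2 + w.im ^ 2 := by
    have h2 : 0 ≤ (1 + r) / 2 := by linarith
    nlinarith [norm_nonneg w]
  have hspos : 0 < w.re ^ 2 + w.im ^ 2 := by nlinarith
  have hw0 : w ≠ 0 := by
    intro h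
    rw [h] at hw
    simp at hw
    linarith
  have hr2 : 0 < r ^ 2 := by positivity
  -- rewrite the Joukowski map using conjugation
  have hmc : w * (starRingEnd ℂ) w = ((w.re : ℂ) ^ 2 + (w.im : ℂ) ^ 2) := by
    rw [Complex.mul_conj]
    simp [Complex.normSq_apply]; push_cast; ring
  have hsC : ((w.re : ℂ) ^ 2 + (w.im : ℂ) ^ 2) ≠ 0 := by
    rw [← hmc]; exact mul_ne_zero hw0 (by simpa using hw0)
  have hkey : JoukowskiMap r w
      = w + (((1 - r ^ 2) / (4 * (w.re ^ 2 + w.im ^ 2)) : ℝ) : ℂ) * (starRingEnd ℂ) w := by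
    unfold JoukowskiMap
    push_cast
    field_simp
    linear_combination ((r : ℂ) ^ 2 - 1) * hmc
  have hre : (JoukowskiMap r w).re
      = w.re + (1 - r ^ 2) / (4 * (w.re ^ 2 + w.im ^ 2)) * w.re := by
    rw [hkey]
    simp only [Complex.add_re, Complex.mul_re, Complex.conj_re, Complex.conj_im,
      Complex.ofReal_re, Complex.ofReal_im]
    ring
  have him : (JoukowskiMap r w).im
      = w.im - (1 - r ^ 2) / (4 * (w.re ^ 2 + w.im ^ 2)) * w.im := by
    rw [hkey]
    simp only [Complex.add_im, Complex.mul_im, Complex.conj_re, Complex.conj_im,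
      Complex.ofReal_re, Complex.ofReal_im]
    ring
  rw [hre, him]
  set u := w.re
  set v := w.im
  set s := u ^ 2 + v ^ 2 with hs
  -- key algebraic identity
  have hident : (u + (1 - r ^ 2) / (4 * s) * u) ^ 2 + (v - (1 - r ^ 2) / (4 * s) * v) ^ 2 / r ^ 2 - 1
      = ((16 * s ^ 2 - 8 * s * (1 + r ^ 2) + (1 - r ^ 2) ^ 2) * (u ^ 2 * r ^ 2 + v ^ 2))
        / (16 * s ^ 2 * r ^ 2) := by
    have hsne : s ≠ 0 := ne_of_gt hspos
    have hrne : r ≠ 0 := ne_of_gt hr0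
    field_simp
    ring
  have hD : 0 < 16 * s ^ 2 - 8 * s * (1 + r ^ 2) + (1 - r ^ 2) ^ 2 := by
    nlinarith [hsbig, sq_nonneg (1 - r), sq_nonneg (1 + r), mul_pos hr0 hspos]
  have hP : 0 < u ^ 2 * r ^ 2 + v ^ 2 := by
    have hr21 : r ^ 2 ≤ 1 := by nlinarith
    nlinarith [mul_pos hr2 hspos, mul_nonneg (sub_nonneg.mpr hr21) (sq_nonneg v)]
  have hden : 0 < 16 * s ^ 2 * r ^ 2 := by positivity
  have := div_pos (mul_pos hD hP) hden
  linarith [hident ▸ this]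
end

section
/- For every real number r with 0 < r ≤ 1 and every z ∈ ℂ with (Re z)² + (Im z)²/r² > 1 (so in particular z ≠ 0), the complex number 1 − (1−r²)/z² does not lie on the nonpositive real axis (−∞, 0]. (Hence the principal branch of the square root in the definition of Φ_r is single-valued and holomorphic on the exterior of the ellipse.) -/
open Complex

theorem stmt_3 (r : ℝ) (hr0 : 0 < r) (hr1 : r ≤ 1) (z : ℂ)
    (hz : z.re ^ 2 + z.im ^ 2 / r ^ 2 > 1) :
    z ≠ 0 ∧
      ¬ ((1 - (1 - (r : ℂ) ^ 2) / z ^ 2).im = 0 ∧ (1 - (1 - (r : ℂ) ^ 2) / z ^ 2).re ≤ 0) := by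
  have hr2 : 0 < r ^ 2 := by positivity
  have hz0 : z ≠ 0 := by
    intro h
    rw [h] at hz
    simp at hz
    nlinarith
  refine ⟨hz0, ?_⟩
  rintro ⟨him, hre⟩
  set x := z.re with hx
  set y := z.im with hy
  have hns : x ^ 2 + y ^ 2 ≠ 0 := by
    intro h
    apply hz0
    have hx0 : x = 0 := by nlinarith [sq_nonneg x, sq_nonneg y]
    have hy0 : y = 0 := by nlinarith [sq_nonneg x, sq_nonneg y]
    exact Complex.ext hx0 hy0
  have hnspos : 0 < x ^ 2 + y ^ 2 := lt_of_le_of_ne (by positivity) (Ne.symm hns)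
  have hzsqre : (z ^ 2).re = x ^ 2 - y ^ 2 := by
    rw [pow_two, Complex.mul_re]; ring
  have hzsqim : (z ^ 2).im = 2 * x * y := by
    rw [pow_two, Complex.mul_im]; ring
  have hnsq : Complex.normSq (z ^ 2) = (x ^ 2 + y ^ 2) ^ 2 := by
    rw [Complex.normSq_apply, hzsqre, hzsqim]; ring
  have hcre : ((1 : ℂ) - (r : ℂ) ^ 2).re = 1 - r ^ 2 := by
    simp [Complex.sub_re, ← Complex.ofReal_pow]
  have hcim : ((1 : ℂ) - (r : ℂ) ^ 2).im = 0 := by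
    simp [Complex.sub_im, ← Complex.ofReal_pow]
  rw [Complex.sub_im, Complex.div_im, hcre, hcim, hnsq, hzsqre, hzsqim] at him
  rw [Complex.sub_re, Complex.div_re, hcre, hcim, hnsq, hzsqre, hzsqim] at hre
  simp only [Complex.one_im, Complex.one_re, zero_mul, zero_div, zero_sub, add_zero,
    neg_sub, sub_zero, neg_eq_zero] at him hre
  have hsq : 0 < ((x ^ 2 + y ^ 2) ^ 2) := by positivity
  have him' : (1 - r ^ 2) * (x * y) = 0 := by
    field_simp at him
    linarith [him]
  have hre' : (x ^ 2 + y ^ 2) ^ 2 ≤ (1 - r ^ 2) * (x ^ 2 - y ^ 2) := by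
    have h1 : 1 ≤ (1 - r ^ 2) * (x ^ 2 - y ^ 2) / (x ^ 2 + y ^ 2) ^ 2 := by linarith
    calc (x ^ 2 + y ^ 2) ^ 2 = 1 * (x ^ 2 + y ^ 2) ^ 2 := by ring
      _ ≤ ((1 - r ^ 2) * (x ^ 2 - y ^ 2) / (x ^ 2 + y ^ 2) ^ 2) * (x ^ 2 + y ^ 2) ^ 2 := by
          exact mul_le_mul_of_nonneg_right h1 (le_of_lt hsq)
      _ = (1 - r ^ 2) * (x ^ 2 - y ^ 2) := by field_simp
  clear him hre hzsqre hzsqim hnsq hcre hcim hns hz0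
  clear_value x y
  have hzr : x ^ 2 * r ^ 2 + y ^ 2 > r ^ 2 := by
    have h2 : y ^ 2 / r ^ 2 * r ^ 2 = y ^ 2 := div_mul_cancel₀ _ (ne_of_gt hr2)
    nlinarith [hz, hr2]
  rcases eq_or_lt_of_le hr1 with h1 | h1
  · have hc0 : 1 - r ^ 2 = 0 := by rw [h1]; ring
    rw [hc0] at hre'
    nlinarith
  · have hc : 0 < 1 - r ^ 2 := by nlinarith
    have hxy : x * y = 0 := by
      rcases mul_eq_zero.mp him' with h | h
      · linarith
      · exact h
    rcases mul_eq_zero.mp hxy with hx0 | hy0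
    · have hx2 : x ^ 2 = 0 := by rw [hx0]; ring
      have hy2 : 0 < y ^ 2 := by nlinarith
      nlinarith [hre', hx2, sq_nonneg y, mul_pos hc hy2]
    · have hy2 : y ^ 2 = 0 := by rw [hy0]; ring
      have hxg : 1 < x ^ 2 := by nlinarith [hzr, hy2, hr2]
      have hxp : (0:ℝ) < x ^ 2 := by linarith
      have hkey : 0 < (x ^ 2 - 1) * x ^ 2 := mul_pos (by linarith) hxp
      nlinarith [hre', hy2, hkey, hr2, hxp]
end

section
/- For every real number r with 0 < r ≤ 1 and every z ∈ ℂ with (Re z)² + (Im z)²/r² > 1, the point w = Φ_r(z) satisfies |w| > (1+r)/2 and Ψ_r(w) = z. Consequently Ψ_r maps {w ∈ ℂ : |w| > (1+r)/2} onto the exterior G_r of the ellipse, and Φ_r is its inverse. -/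
open Complex

set_option maxHeartbeats 1000000

lemma re_cpow_half (u : ℂ) : 0 ≤ (u ^ ((1:ℂ)/2)).re := by
  by_cases hu : u = 0
  · simp [hu, Complex.zero_cpow (by norm_num : (1:ℂ)/2 ≠ 0)]
  · rw [Complex.cpow_def_of_ne_zero hu, Complex.exp_re]
    refine mul_nonneg (Real.exp_pos _).le (Real.cos_nonneg_of_mem_Icc ⟨?_, ?_⟩)
    · have := Complex.neg_pi_lt_arg u
      simp [Complex.mul_im, Complex.log_im]
      linarith
    · have := Complex.arg_le_pi u
      simp [Complex.mul_im, Complex.log_im]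
      linarith


/-- The inverse map `Φ_r(z) = z (1/2 + (1/2) √(1 - (1 - r²)/z²))`, with the
principal branch of the square root (`√1 = 1`). -/
noncomputable def PhiMap (r : ℝ) (z : ℂ) : ℂ :=
  z * (1 / 2 + (1 / 2) * (1 - (1 - (r : ℂ) ^ 2) / z ^ 2) ^ ((1 : ℂ) / 2))

theorem stmt_4 (r : ℝ) (hr0 : 0 < r) (hr1 : r ≤ 1) (z : ℂ)
    (hz : z.re ^ 2 + z.im ^ 2 / r ^ 2 > 1) :
    (1 + r) / 2 < ‖PhiMap r z‖ ∧ JoukowskiMap r (PhiMap r z) = z := by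
  have hr2 : (0:ℝ) < r ^ 2 := by positivity
  set c : ℝ := 1 - r ^ 2 with hc
  have hc0 : 0 ≤ c := by nlinarith
  have hz0 : z ≠ 0 := by
    intro h
    rw [h] at hz
    simp at hz
    nlinarith
  set s : ℂ := (1 - (1 - (r : ℂ) ^ 2) / z ^ 2) ^ ((1 : ℂ) / 2) with hs
  have hcC : ((c : ℂ)) = 1 - (r : ℂ) ^ 2 := by push_cast [hc]; ring
  have hsre : 0 ≤ s.re := re_cpow_half _
  have hs2 : s ^ 2 = 1 - (1 - (r : ℂ) ^ 2) / z ^ 2 := by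
    rw [hs]
    rw [show (1 : ℂ)/2 = ((2 : ℕ) : ℂ)⁻¹ by norm_num]
    exact Complex.cpow_nat_inv_pow _ two_ne_zero
  have hz2 : (z : ℂ) ^ 2 ≠ 0 := pow_ne_zero _ hz0
  have hs2' : z ^ 2 * s ^ 2 = z ^ 2 - (c : ℂ) := by
    rw [hs2, hcC]; field_simp
  set w : ℂ := PhiMap r z with hw
  have hwe : w = z * (1 + s) / 2 := by rw [hw, PhiMap, ← hs]; ring
  clear_value w
  clear hw
  clear_value s
  clear hs
  have hw0 : w ≠ 0 := by
    rw [hwe]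
    have h1s : (1 + s) ≠ 0 := by
      intro h
      have : (1 + s).re = 0 := by rw [h]; simp
      simp [Complex.add_re] at this
      linarith
    simp [hz0, h1s]
  have hquad : 4 * w ^ 2 - 4 * z * w + (c : ℂ) = 0 := by
    rw [hwe]
    linear_combination hs2'
  have hpsi : JoukowskiMap r w = z := by
    rw [JoukowskiMap, ← hcC]
    field_simp
    first
    | linear_combination -hquad
    | linear_combination 2 * hquad
    | linear_combination hquad
    | linear_combination -2 * hquad
  -- |z - w| ≤ |w|
  have habs1 : ‖1 - s‖ ≤ ‖1 + s‖ := by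
    have h1 : Complex.normSq (1 - s) ≤ Complex.normSq (1 + s) := by
      simp [Complex.normSq_apply]
      nlinarith
    rw [Complex.norm_def, Complex.norm_def]
    exact Real.sqrt_le_sqrt h1
  have habs : ‖z - w‖ ≤ ‖w‖ := by
    have hzw : z - w = z * (1 - s) / 2 := by rw [hwe]; ring
    rw [hzw, hwe, norm_div, norm_div, norm_mul, norm_mul]
    gcongr
  set ρ : ℝ := ‖w‖ with hρ
  have hρ0 : 0 < ρ := by rw [hρ]; exact norm_pos_iff.mpr hw0
  have hprod : w * (z - w) = (c : ℂ) / 4 := by linear_combination -hquad / 4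
  have hcle : c ≤ 4 * ρ ^ 2 := by
    have habs2 : ρ * ‖z - w‖ = c / 4 := by
      rw [hρ, ← norm_mul, hprod, norm_div, Complex.norm_real, Real.norm_of_nonneg hc0]
      norm_num
    nlinarith [norm_nonneg (z - w)]
  have hn : Complex.normSq w = ρ ^ 2 := (Complex.sq_norm w).symm
  have hρ2 : (ρ : ℝ) ^ 2 ≠ 0 := by positivity
  have hρ2C : (((ρ : ℝ) ^ 2 : ℝ) : ℂ) ≠ 0 := by exact_mod_cast hρ2
  have hzeq : z = w + ((c / (4 * ρ ^ 2) : ℝ) : ℂ) * (starRingEnd ℂ) w := by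
    have hinv : w⁻¹ = (starRingEnd ℂ) w * (((ρ ^ 2 : ℝ)) : ℂ)⁻¹ := by
      rw [Complex.inv_def, hn]; norm_cast
    have hzw : z - w = (c : ℂ) / 4 * w⁻¹ := by
      field_simp
      linear_combination -hquad
    rw [hinv] at hzw
    rw [← sub_eq_iff_eq_add', hzw]
    push_cast
    field_simp
  set t : ℝ := c / (4 * ρ ^ 2) with ht
  have hzre : z.re = w.re * (1 + t) := by
    rw [hzeq]; simp [Complex.add_re, Complex.re_ofReal_mul]; ring
  have hzim : z.im = w.im * (1 - t) := by
    rw [hzeq]; simp [Complex.add_im, Complex.mul_im]; ring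
  have ht0 : 0 ≤ t := by positivity
  have ht1 : t ≤ 1 := by
    rw [ht, div_le_one (by positivity)]; linarith
  have hab : w.re ^ 2 + w.im ^ 2 = ρ ^ 2 := by
    rw [← hn, Complex.normSq_apply]; ring
  refine ⟨?_, hpsi⟩
  by_contra hle
  push_neg at hle
  have h2ρ : 2 * ρ ≤ 1 + r := by linarith
  have hlow : 1 - r ≤ 2 * ρ := by
    rcases le_or_gt (1 - r) 0 with h|h
    · linarith
    · nlinarith [mul_nonneg (by linarith : (0:ℝ) ≤ 1 - r) (by linarith : (0:ℝ) ≤ 2*r)]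
  have h1 : 4 * ρ ^ 2 + c ≤ 4 * ρ := by nlinarith [(1 + r - 2*ρ) * (2*ρ - (1 - r))]
  have h2 : 4 * ρ ^ 2 - c ≤ 4 * ρ * r := by nlinarith [(1 + r - 2*ρ) * (2 - (1 + r - 2*ρ))]
  have h3 : (0:ℝ) ≤ 4 * ρ ^ 2 - c := by linarith
  have h1' : (ρ * (1 + t)) ^ 2 ≤ 1 := by
    have hx : ρ * (1 + t) ≤ 1 := by
      rw [ht, show ρ * (1 + c / (4 * ρ ^ 2)) = (4 * ρ ^ 2 + c) / (4 * ρ) by field_simp,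
        div_le_one (by positivity)]
      linarith
    have hxp : (0:ℝ) ≤ ρ * (1 + t) := by positivity
    nlinarith [mul_nonneg (sub_nonneg.mpr hx) (by linarith : (0:ℝ) ≤ 1 + ρ * (1 + t))]
  have h2' : (ρ * (1 - t)) ^ 2 ≤ r ^ 2 := by
    have hnt : (0:ℝ) ≤ 1 - t := by linarith
    have hxp : (0:ℝ) ≤ ρ * (1 - t) := mul_nonneg hρ0.le hnt
    have hx : ρ * (1 - t) ≤ r := by
      rw [ht, show ρ * (1 - c / (4 * ρ ^ 2)) = (4 * ρ ^ 2 - c) / (4 * ρ) by field_simp,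
        div_le_iff₀ (by positivity)]
      linarith
    nlinarith [mul_nonneg (sub_nonneg.mpr hx) (by linarith : (0:ℝ) ≤ r + ρ * (1 - t))]
  have e1 : (w.re * (1 + t)) ^ 2 * ρ ^ 2 ≤ w.re ^ 2 := by nlinarith [sq_nonneg w.re]
  have e2 : (w.im * (1 - t)) ^ 2 * ρ ^ 2 ≤ w.im ^ 2 * r ^ 2 := by nlinarith [sq_nonneg w.im]
  rw [hzre, hzim] at hz
  have hρsq : (0:ℝ) < ρ ^ 2 := by positivity
  have hzlt : ρ ^ 2 * r ^ 2 <
      (w.re * (1 + t)) ^ 2 * ρ ^ 2 * r ^ 2 + (w.im * (1 - t)) ^ 2 * ρ ^ 2 := by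
    have hpos : (0:ℝ) < ρ ^ 2 * r ^ 2 := by positivity
    have := mul_lt_mul_of_pos_right hz hpos
    have expand : ((w.re * (1 + t)) ^ 2 + (w.im * (1 - t)) ^ 2 / r ^ 2) * (ρ ^ 2 * r ^ 2)
        = (w.re * (1 + t)) ^ 2 * ρ ^ 2 * r ^ 2 + (w.im * (1 - t)) ^ 2 * ρ ^ 2 := by
      field_simp
    rw [one_mul, expand] at this
    exact this
  have e1' : (w.re * (1 + t)) ^ 2 * ρ ^ 2 * r ^ 2 ≤ w.re ^ 2 * r ^ 2 :=
    mul_le_mul_of_nonneg_right e1 hr2.le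
  have hab' : w.re ^ 2 * r ^ 2 + w.im ^ 2 * r ^ 2 = ρ ^ 2 * r ^ 2 := by
    linear_combination r ^ 2 * hab
  linarith
end
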